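/- arXiv:1912.01847 — 3 statements merged into one kernel-verified Lean document; each statement's English description precedes it below -/
import Mathlib

section
/- Let (Ω, μ) be a measure space with μ(Ω) < ∞, let v : Ω → ℝ be measurable with ∫_Ω |v|⁴ dμ < ∞, and let c₁, c₂, c₃ > 0. Define p₃ : ℝ → ℝ by p₃(x) = −c₁x + c₂x² − c₃x³. Then ∫_Ω p₃(v(ζ))·v(ζ) dμ(ζ) ≤ (27·c₂⁴/(32·c₃³))·μ(Ω) − c₁·∫_Ω v² dμ − (c₃/2)·∫_Ω v⁴ dμ. -/
open MeasureTheory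

/-! The pointwise bound `b x³ - (c/2) x⁴ ≤ 27 b⁴ / (32 c³)`, whose right-hand side is the maximum
of the left-hand side (attained at `x = 3b/(2c)`), bounds `p₃(v) v` by
`27 c₂⁴ / (32 c₃³) - c₁ v² - (c₃/2) v⁴`; integrating over the finite measure space gives the
estimate, all powers `v ^ k` with `k ≤ 4` being integrable because `v ∈ L⁴(μ)`. -/

lemma mul_pow_three_sub_half_mul_pow_four_le (b : ℝ) {c : ℝ} (hc : 0 < c) (x : ℝ) :
    b * x ^ 3 - c / 2 * x ^ 4 ≤ 27 * b ^ 4 / (32 * c ^ 3) := by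
  rw [le_div_iff₀ (by positivity)]
  -- with `y = 2cx`: `y⁴ - 4by³ + 27b⁴ = (y - 3b)² ((y + b)² + 2b²)`
  have key : 0 ≤ (2 * c * x - 3 * b) ^ 2 * ((2 * c * x + b) ^ 2 + 2 * b ^ 2) := by positivity
  nlinarith [key]

lemma integrable_pow_of_le {α : Type*} [MeasurableSpace α] {μ : Measure α} [IsFiniteMeasure μ]
    {f : α → ℝ} (hf : AEStronglyMeasurable f μ) {p q : ℕ} (hpq : p ≤ q)
    (hint : Integrable (fun x => |f x| ^ q) μ) : Integrable (fun x => f x ^ p) μ := by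
  have hnorm : Integrable (fun x => ‖f x‖ ^ q) μ := by simpa only [Real.norm_eq_abs] using hint
  exact (integrable_norm_pow_of_le hf hpq hnorm).mono' (hf.pow p)
    (ae_of_all _ fun x => by simp only [norm_pow, le_refl])

theorem fhn_nonlinearity_dissipation_general {Ω : Type*} [MeasurableSpace Ω]
    (μ : Measure Ω) [IsFiniteMeasure μ]
    (v : Ω → ℝ) (hv : Measurable v)
    (h4 : Integrable (fun ζ => |v ζ| ^ 4) μ)
    (c₁ c₂ c₃ : ℝ) (hc₃ : 0 < c₃)
    (p₃ : ℝ → ℝ) (hp₃ : ∀ x, p₃ x = -c₁ * x + c₂ * x ^ 2 - c₃ * x ^ 3) :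
    ∫ ζ, p₃ (v ζ) * v ζ ∂μ ≤
      (27 * c₂ ^ 4 / (32 * c₃ ^ 3)) * (μ Set.univ).toReal
        - c₁ * ∫ ζ, (v ζ) ^ 2 ∂μ - (c₃ / 2) * ∫ ζ, (v ζ) ^ 4 ∂μ := by
  set K := 27 * c₂ ^ 4 / (32 * c₃ ^ 3)
  have hpow {k : ℕ} (hk : k ≤ 4) : Integrable (fun ζ => v ζ ^ k) μ :=
    integrable_pow_of_le hv.aestronglyMeasurable hk h4
  have hv2 : Integrable (fun ζ => v ζ ^ 2) μ := hpow (by norm_num)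
  have hv4 : Integrable (fun ζ => v ζ ^ 4) μ := hpow le_rfl
  have hK2 : Integrable (fun ζ => K - c₁ * v ζ ^ 2) μ :=
    (integrable_const K).sub (hv2.const_mul c₁)
  have hlhs : Integrable (fun ζ => p₃ (v ζ) * v ζ) μ := by
    have hexpand : (fun ζ => p₃ (v ζ) * v ζ) =
        fun ζ => -c₁ * v ζ ^ 2 + c₂ * v ζ ^ 3 - c₃ * v ζ ^ 4 := by
      funext ζ; rw [hp₃]; ring
    rw [hexpand]
    exact ((hv2.const_mul _).add ((hpow (by norm_num)).const_mul _)).sub (hv4.const_mul _)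
  have hbound (x : ℝ) : p₃ x * x ≤ K - c₁ * x ^ 2 - c₃ / 2 * x ^ 4 := by
    have := mul_pow_three_sub_half_mul_pow_four_le c₂ hc₃ x
    rw [hp₃]; linarith
  calc ∫ ζ, p₃ (v ζ) * v ζ ∂μ ≤ ∫ ζ, (K - c₁ * v ζ ^ 2 - c₃ / 2 * v ζ ^ 4) ∂μ :=
        integral_mono hlhs (hK2.sub (hv4.const_mul _)) fun ζ => hbound (v ζ)
    _ = K * (μ Set.univ).toReal - c₁ * ∫ ζ, v ζ ^ 2 ∂μ - c₃ / 2 * ∫ ζ, v ζ ^ 4 ∂μ := by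
        rw [integral_sub hK2 (hv4.const_mul _),
          integral_sub (integrable_const K) (hv2.const_mul c₁), integral_const,
          integral_const_mul, integral_const_mul, smul_eq_mul, measureReal_def]
        ring

/-- Dissipation estimate for the FitzHugh–Nagumo nonlinearity
`p₃(x) = −c₁x + c₂x² − c₃x³`:
`∫ p₃(v) v dμ ≤ (27 c₂⁴/(32 c₃³)) μ(Ω) − c₁ ∫ v² dμ − (c₃/2) ∫ v⁴ dμ`. -/
theorem fhn_nonlinearity_dissipation {Ω : Type*} [MeasurableSpace Ω]
    (μ : Measure Ω) [IsFiniteMeasure μ]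
    (v : Ω → ℝ) (hv : Measurable v)
    (h4 : Integrable (fun ζ => |v ζ| ^ 4) μ)
    (c₁ c₂ c₃ : ℝ) (hc₁ : 0 < c₁) (hc₂ : 0 < c₂) (hc₃ : 0 < c₃)
    (p₃ : ℝ → ℝ) (hp₃ : ∀ x, p₃ x = -c₁ * x + c₂ * x ^ 2 - c₃ * x ^ 3) :
    ∫ ζ, p₃ (v ζ) * v ζ ∂μ ≤
      (27 * c₂ ^ 4 / (32 * c₃ ^ 3)) * (μ Set.univ).toReal
        - c₁ * ∫ ζ, (v ζ) ^ 2 ∂μ - (c₃ / 2) * ∫ ζ, (v ζ) ^ 4 ∂μ :=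
  fhn_nonlinearity_dissipation_general μ v hv h4 c₁ c₂ c₃ hc₃ p₃ hp₃
end

section
/- Let (b_j)_{j∈ℕ} be real numbers and (β_j)_{j∈ℕ} positive real numbers such that the series Σ_j b_j²/β_j converges with sum S. Let δ ∈ ℝ, U ≥ 0, and let u : [δ,∞) → ℝ be measurable with |u(s)| ≤ U for almost every s ≥ δ. Then for every t ≥ δ, the family j ↦ β_j·b_j²·(∫_δ^t e^{−β_j(t−s)}·u(s) ds)² is summable and Σ_j β_j·b_j²·(∫_δ^t e^{−β_j(t−s)}·u(s) ds)² ≤ U²·S. -/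
open MeasureTheory intervalIntegral

/-! Each mode contributes `β_j b_j² (∫_δ^t e^{-β_j (t-s)} u(s) ds)²`, and since
`∫_δ^t e^{-β_j (t-s)} ds ≤ 1/β_j`, the integral is at most `U/β_j` in absolute value.
So the `j`-th term is at most `U² b_j²/β_j`, and summing by comparison gives `U² S`. -/

theorem integral_exp_neg_mul_sub {β : ℝ} (hβ : β ≠ 0) (δ t : ℝ) :
    ∫ s in δ..t, Real.exp (-β * (t - s)) = (1 - Real.exp (-β * (t - δ))) / β := by
  have hderiv : ∀ s ∈ Set.uIcc δ t,
      HasDerivAt (fun s => Real.exp (-β * (t - s)) / β) (Real.exp (-β * (t - s))) s := by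
    intro s _
    have hlin : HasDerivAt (fun s : ℝ => -β * (t - s)) β s := by
      simpa using ((hasDerivAt_id s).const_sub t).const_mul (-β)
    exact (hlin.exp.div_const β).congr_deriv (mul_div_cancel_right₀ _ hβ)
  have hcont : Continuous fun s => Real.exp (-β * (t - s)) := by fun_prop
  rw [integral_eq_sub_of_hasDerivAt hderiv (hcont.intervalIntegrable _ _)]
  simp only [sub_self, mul_zero, Real.exp_zero]
  ring

theorem integral_exp_neg_mul_sub_le {β : ℝ} (hβ : 0 < β) (δ t : ℝ) :
    ∫ s in δ..t, Real.exp (-β * (t - s)) ≤ 1 / β := by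
  rw [integral_exp_neg_mul_sub hβ.ne']
  gcongr
  linarith [Real.exp_pos (-β * (t - δ))]

theorem abs_integral_exp_neg_mul_sub_mul_le {β δ t U : ℝ} {u : ℝ → ℝ} (hβ : 0 < β)
    (hU : 0 ≤ U) (hδt : δ ≤ t) (hbdd : ∀ᵐ s : ℝ, δ ≤ s → |u s| ≤ U) :
    |∫ s in δ..t, Real.exp (-β * (t - s)) * u s| ≤ U / β := by
  have hpointwise : ∀ᵐ s : ℝ, s ∈ Set.Ioc δ t →
      ‖Real.exp (-β * (t - s)) * u s‖ ≤ U * Real.exp (-β * (t - s)) := by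
    filter_upwards [hbdd] with s hs hmem
    rw [Real.norm_eq_abs, abs_mul, Real.abs_exp, mul_comm U]
    exact mul_le_mul_of_nonneg_left (hs hmem.1.le) (Real.exp_pos _).le
  calc |∫ s in δ..t, Real.exp (-β * (t - s)) * u s|
      ≤ ∫ s in δ..t, U * Real.exp (-β * (t - s)) :=
        intervalIntegral.norm_integral_le_of_norm_le hδt hpointwise
          ((by fun_prop : Continuous fun s => U * Real.exp (-β * (t - s))).intervalIntegrable _ _)
    _ = U * ∫ s in δ..t, Real.exp (-β * (t - s)) := integral_const_mul U _
    _ ≤ U * (1 / β) := mul_le_mul_of_nonneg_left (integral_exp_neg_mul_sub_le hβ δ t) hU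
    _ = U / β := mul_one_div U β

theorem mul_sq_le_of_abs_le_div {β b I U : ℝ} (hβ : 0 < β) (hI : |I| ≤ U / β) :
    β * b ^ 2 * I ^ 2 ≤ U ^ 2 * (b ^ 2 / β) := by
  calc β * b ^ 2 * I ^ 2 ≤ β * b ^ 2 * (U / β) ^ 2 :=
        mul_le_mul_of_nonneg_left (sq_le_sq' (abs_le.mp hI).1 (abs_le.mp hI).2) (by positivity)
    _ = U ^ 2 * (b ^ 2 / β) := by field_simp

theorem spectral_norm_bound_general (b β : ℕ → ℝ) (hβ : ∀ j, 0 < β j) (S : ℝ)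
    (hsum : HasSum (fun j => b j ^ 2 / β j) S)
    (δ U : ℝ) (hU : 0 ≤ U) (u : ℝ → ℝ)
    (hbdd : ∀ᵐ s : ℝ, δ ≤ s → |u s| ≤ U) :
    ∀ t, δ ≤ t →
      Summable (fun j =>
        β j * b j ^ 2 * (∫ s in δ..t, Real.exp (-β j * (t - s)) * u s) ^ 2) ∧
      (∑' j, β j * b j ^ 2 * (∫ s in δ..t, Real.exp (-β j * (t - s)) * u s) ^ 2)
        ≤ U ^ 2 * S := by
  intro t hδt
  have hterm : ∀ j, β j * b j ^ 2 * (∫ s in δ..t, Real.exp (-β j * (t - s)) * u s) ^ 2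
      ≤ U ^ 2 * (b j ^ 2 / β j) := fun j =>
    mul_sq_le_of_abs_le_div (hβ j) (abs_integral_exp_neg_mul_sub_mul_le (hβ j) hU hδt hbdd)
  have hnonneg : ∀ j, 0 ≤ β j * b j ^ 2 * (∫ s in δ..t, Real.exp (-β j * (t - s)) * u s) ^ 2 :=
    fun j => by have := (hβ j).le; positivity
  have hdom := hsum.mul_left (U ^ 2)
  have hsummable := hdom.summable.of_nonneg_of_le hnonneg hterm
  exact ⟨hsummable, hdom.tsum_eq ▸ hsummable.tsum_le_tsum hterm hdom.summable⟩

/-- Spectral bound `Σ β_j b_j² (∫_δ^t e^{−β_j(t−s)} u(s) ds)² ≤ U² S`, where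
`S = Σ b_j²/β_j` and `|u| ≤ U` a.e. on `[δ,∞)`. -/
theorem spectral_norm_bound (b β : ℕ → ℝ) (hβ : ∀ j, 0 < β j) (S : ℝ)
    (hsum : HasSum (fun j => b j ^ 2 / β j) S)
    (δ U : ℝ) (hU : 0 ≤ U) (u : ℝ → ℝ) (hu : Measurable u)
    (hbdd : ∀ᵐ s : ℝ, δ ≤ s → |u s| ≤ U) :
    ∀ t, δ ≤ t →
      Summable (fun j =>
        β j * b j ^ 2 * (∫ s in δ..t, Real.exp (-β j * (t - s)) * u s) ^ 2) ∧
      (∑' j, β j * b j ^ 2 * (∫ s in δ..t, Real.exp (-β j * (t - s)) * u s) ^ 2)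
        ≤ U ^ 2 * S :=
  spectral_norm_bound_general b β hβ S hsum δ U hU u hbdd
end

section
/- Let (b_j)_{j∈ℕ} be real numbers and (β_j)_{j∈ℕ} positive real numbers such that the series Σ_j b_j²/β_j converges. Let δ ∈ ℝ, U ≥ 0, and let u : [δ,∞) → ℝ be measurable with |u(s)| ≤ U for almost every s ≥ δ. Then for all s, t with δ ≤ s ≤ t, the family j ↦ β_j·b_j²·(∫_δ^t e^{−β_j(t−τ)}·u(τ) dτ − ∫_δ^s e^{−β_j(s−τ)}·u(τ) dτ)² is summable and Σ_j β_j·b_j²·(∫_δ^t e^{−β_j(t−τ)}·u(τ) dτ − ∫_δ^s e^{−β_j(s−τ)}·u(τ) dτ)² ≤ 4·U²·Σ_j (b_j²/β_j)·(1 − e^{−β_j(t−s)})². -/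
/-!
Write `A = ∫_δ^s e^{-β(s-τ)} u`, `B = ∫_s^t e^{-β(t-τ)} u` and `E = e^{-β(t-s)}`. Since the
kernel satisfies `e^{-β(t-τ)} = E e^{-β(s-τ)}`, the difference of the two integrals is
`(E - 1) A + B`. Bounding `u` by `U` gives `|A| ≤ U/β` and `|B| ≤ U (1 - E)/β`, hence the
difference is at most `2U(1 - E)/β` in absolute value. Squaring and weighting by `β b²` gives
`4U² (b²/β)(1 - E)²`, which is summable by comparison with `b²/β` because `0 ≤ 1 - E ≤ 1`.
-/

open MeasureTheory Set Real

/-- In the spectral representation, the `j`-th coordinate of the mild solution `x_u^δ(t)` is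
`b j * expConv (β j) u δ t`. -/
noncomputable def expConv (β : ℝ) (u : ℝ → ℝ) (a t : ℝ) : ℝ :=
  ∫ τ in a..t, exp (-β * (t - τ)) * u τ

section ExpConv

variable {β U a s t : ℝ} {u : ℝ → ℝ}

lemma integral_exp_neg_mul_sub_s11 (hβ : β ≠ 0) (c a b : ℝ) :
    ∫ τ in a..b, exp (-β * (c - τ)) = (exp (-β * (c - b)) - exp (-β * (c - a))) / β := by
  have hderiv : ∀ x ∈ uIcc a b,
      HasDerivAt (fun τ => exp (-β * (c - τ)) / β) (exp (-β * (c - x))) x := by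
    intro x _
    refine ((((hasDerivAt_id' x).const_sub c).const_mul (-β)).exp.div_const β).congr_deriv ?_
    field_simp
  rw [intervalIntegral.integral_eq_sub_of_hasDerivAt hderiv
    ((by fun_prop : Continuous _).intervalIntegrable a b)]
  ring

lemma expConv_eq_exp_mul_add (β : ℝ) (has : IntervalIntegrable u volume a s)
    (hst : IntervalIntegrable u volume s t) :
    expConv β u a t = exp (-β * (t - s)) * expConv β u a s + expConv β u s t := by
  have hker : Continuous fun τ => exp (-β * (t - τ)) := by fun_prop
  rw [expConv, ← intervalIntegral.integral_add_adjacent_intervals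
    (has.continuousOn_mul hker.continuousOn) (hst.continuousOn_mul hker.continuousOn), expConv,
    ← intervalIntegral.integral_const_mul]
  congr 1
  refine intervalIntegral.integral_congr fun τ _ => ?_
  rw [← mul_assoc, ← exp_add]
  ring_nf

lemma abs_expConv_le (hβ : β ≠ 0) (hat : a ≤ t) (hu : ∀ᵐ τ, τ ∈ Ioc a t → |u τ| ≤ U) :
    |expConv β u a t| ≤ U * ((1 - exp (-β * (t - a))) / β) := by
  have hle := intervalIntegral.norm_integral_le_of_norm_le hat
    (f := fun τ => exp (-β * (t - τ)) * u τ) (g := fun τ => U * exp (-β * (t - τ)))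
    (hu.mono fun τ hτ hmem => by
      rw [norm_mul, norm_of_nonneg (exp_pos _).le, mul_comm U]
      exact mul_le_mul_of_nonneg_left (hτ hmem) (exp_pos _).le)
    ((by fun_prop : Continuous _).intervalIntegrable a t)
  rwa [intervalIntegral.integral_const_mul, integral_exp_neg_mul_sub_s11 hβ, sub_self, mul_zero,
    exp_zero] at hle

lemma abs_expConv_sub_le (hβ : 0 < β) (hU : 0 ≤ U) (has : a ≤ s) (hst : s ≤ t)
    (hint : IntervalIntegrable u volume a t) (hu : ∀ᵐ τ, τ ∈ Ioc a t → |u τ| ≤ U) :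
    |expConv β u a t - expConv β u a s| ≤ 2 * U / β * (1 - exp (-β * (t - s))) := by
  have hs : s ∈ uIcc a t := mem_uIcc_of_le has hst
  rw [expConv_eq_exp_mul_add β (hint.mono_set (uIcc_subset_uIcc_left hs))
    (hint.mono_set (uIcc_subset_uIcc_right hs))]
  set E := exp (-β * (t - s))
  have hE : E ≤ 1 := exp_le_one_iff.2 (by nlinarith)
  have hA : |expConv β u a s| ≤ U / β := by
    refine (abs_expConv_le hβ.ne' has (hu.mono fun τ h hτ => h ⟨hτ.1, hτ.2.trans hst⟩)).trans ?_
    rw [mul_div_assoc', div_le_div_iff_of_pos_right hβ]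
    exact mul_le_of_le_one_right hU (sub_le_self _ (exp_pos _).le)
  have hB : |expConv β u s t| ≤ U * ((1 - E) / β) :=
    abs_expConv_le hβ.ne' hst (hu.mono fun τ h hτ => h ⟨has.trans_lt hτ.1, hτ.2⟩)
  calc |E * expConv β u a s + expConv β u s t - expConv β u a s|
      = |(E - 1) * expConv β u a s + expConv β u s t| := by ring_nf
    _ ≤ (1 - E) * |expConv β u a s| + |expConv β u s t| := by
      rw [← abs_of_nonneg (sub_nonneg.2 hE), ← abs_neg (1 - E), neg_sub, ← abs_mul]
      exact abs_add_le _ _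
    _ ≤ (1 - E) * (U / β) + U * ((1 - E) / β) := by gcongr
    _ = 2 * U / β * (1 - E) := by ring

end ExpConv

lemma intervalIntegrable_of_ae_abs_le {u : ℝ → ℝ} {U a b : ℝ} (hu : Measurable u)
    (hbdd : ∀ᵐ τ, τ ∈ uIoc a b → |u τ| ≤ U) : IntervalIntegrable u volume a b :=
  (intervalIntegrable_const (c := U)).mono_fun' hu.aestronglyMeasurable
    ((ae_restrict_iff' measurableSet_uIoc).2 hbdd)

/-- Difference estimate in the spectral representation:
`Σ β_j b_j² (∫_δ^t e^{−β_j(t−τ)}u(τ)dτ − ∫_δ^s e^{−β_j(s−τ)}u(τ)dτ)²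
  ≤ 4U² Σ (b_j²/β_j)(1 − e^{−β_j(t−s)})²` for `δ ≤ s ≤ t`. -/
theorem spectral_difference_bound (b β : ℕ → ℝ) (hβ : ∀ j, 0 < β j)
    (hsum : Summable fun j => b j ^ 2 / β j)
    (δ U : ℝ) (hU : 0 ≤ U) (u : ℝ → ℝ) (hu : Measurable u)
    (hbdd : ∀ᵐ s : ℝ, δ ≤ s → |u s| ≤ U) :
    ∀ s t, δ ≤ s → s ≤ t →
      Summable (fun j =>
        β j * b j ^ 2 *
          ((∫ τ in δ..t, Real.exp (-β j * (t - τ)) * u τ) -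
            ∫ τ in δ..s, Real.exp (-β j * (s - τ)) * u τ) ^ 2) ∧
      (∑' j, β j * b j ^ 2 *
          ((∫ τ in δ..t, Real.exp (-β j * (t - τ)) * u τ) -
            ∫ τ in δ..s, Real.exp (-β j * (s - τ)) * u τ) ^ 2)
        ≤ 4 * U ^ 2 *
            ∑' j, (b j ^ 2 / β j) * (1 - Real.exp (-β j * (t - s))) ^ 2 := by
  intro s t hδs hst
  have hbdd' : ∀ᵐ τ, τ ∈ Ioc δ t → |u τ| ≤ U := hbdd.mono fun τ h hτ => h hτ.1.le
  have hint : IntervalIntegrable u volume δ t :=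
    intervalIntegrable_of_ae_abs_le hu (by rwa [uIoc_of_le (hδs.trans hst)])
  have hE : ∀ j, 0 ≤ 1 - exp (-β j * (t - s)) ∧ 1 - exp (-β j * (t - s)) ≤ 1 := fun j =>
    ⟨sub_nonneg.2 (exp_le_one_iff.2 (by nlinarith [hβ j])), sub_le_self _ (exp_pos _).le⟩
  have hmaj : Summable fun j => b j ^ 2 / β j * (1 - exp (-β j * (t - s))) ^ 2 :=
    hsum.of_nonneg_of_le (fun j => by have := hβ j; positivity) fun j =>
      mul_le_of_le_one_right (by have := hβ j; positivity) (pow_le_one₀ (hE j).1 (hE j).2)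
  have hpt : ∀ j, β j * b j ^ 2 * (expConv (β j) u δ t - expConv (β j) u δ s) ^ 2 ≤
      4 * U ^ 2 * (b j ^ 2 / β j * (1 - exp (-β j * (t - s))) ^ 2) := fun j => by
    have hD := abs_expConv_sub_le (hβ j) hU hδs hst hint hbdd'
    calc _ ≤ β j * b j ^ 2 * (2 * U / β j * (1 - exp (-β j * (t - s)))) ^ 2 := by
          have := hβ j
          exact mul_le_mul_of_nonneg_left (sq_le_sq' (abs_le.1 hD).1 (abs_le.1 hD).2)
            (by positivity)
      _ = _ := by field_simp [(hβ j).ne']; ring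
  have hsummable := (hmaj.mul_left _).of_nonneg_of_le (fun j => by have := hβ j; positivity) hpt
  exact ⟨hsummable, (hsummable.tsum_le_tsum hpt (hmaj.mul_left _)).trans_eq tsum_mul_left⟩
end
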